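/- Let G(M) = (N, X, π) be the bottleneck congestion game corresponding to a congestion model M = (N, F, X, (c_f)_{f∈F}). Then G(M) has the π-LIP: for every improving move (x, (y_S, x_{−S})) of any nonempty coalition S ⊆ N, the vector (π_i(y_S, x_{−S}))_{i∈N} is strictly sorted-lexicographically smaller than (π_i(x))_{i∈N}. -/

import Mathlib

/-!
Let `S` deviate from `x` to `y`. Among the players whose cost strictly drops, let `t` be the
largest old cost. A player `i` whose cost rises is outside `S`, so her strategy is unchanged;
her new bottleneck facility `f` must have gained a user `j`, since otherwise monotonicity would
bound its cost by the old one. That user belongs to `S`, so `π y i = c f y ≤ π y j < π x j ≤ t`.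
Hence no coordinate at level `≥ t` increases, while one of old value `t` strictly drops: for every
`s ≥ t` the new vector has at most as many entries `≥ s` as the old one, for `s = t` strictly
fewer, and this forces the first difference of the sorted vectors to be a decrease.
-/

open Finset

/-- The vector `a` sorted in non-increasing order. -/
noncomputable def sortDesc {α : Type*} [LinearOrder α] {q : ℕ} (a : Fin q → α) : Fin q → α :=
  fun i => a (Tuple.sort a i.rev)

/-- `a` is strictly sorted-lexicographically smaller than `b`. -/
def SLexLt {α : Type*} [LinearOrder α] {q : ℕ} (a b : Fin q → α) : Prop :=
  ∃ m : Fin q, (∀ i, i < m → sortDesc a i = sortDesc b i) ∧ sortDesc a m < sortDesc b m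

/-- Sorted-lexicographic comparison of vectors indexed by an arbitrary finite type. -/
def SLexLtOn {α : Type*} [LinearOrder α] {ι : Type*} [Fintype ι] (a b : ι → α) : Prop :=
  SLexLt (a ∘ (Fintype.equivFin ι).symm) (b ∘ (Fintype.equivFin ι).symm)

/-- An improving move: some nonempty coalition `S` deviates (players outside `S`
keep their strategies) and every member of `S` strictly decreases her cost. -/
def ImprovingMove {ι : Type*} {X : ι → Type*} {β : Type*} [Preorder β]
    (π : (∀ i, X i) → ι → β) (x y : ∀ i, X i) : Prop :=
  ∃ S : Finset ι, S.Nonempty ∧ (∀ i ∉ S, y i = x i) ∧ ∀ i ∈ S, π y i < π x i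

section SortedLex

variable {α : Type*} [LinearOrder α] {q : ℕ}

lemma sortDesc_antitone (a : Fin q → α) : Antitone (sortDesc a) :=
  fun _ _ hij => Tuple.monotone_sort a (Fin.rev_le_rev.mpr hij)

lemma card_filter_le_sortDesc (a : Fin q → α) (s : α) : #{i | s ≤ sortDesc a i} = #{i | s ≤ a i} :=
  card_equiv (Fin.revPerm.trans (Tuple.sort a)) fun _ => by
    simp only [mem_filter_univ]; rfl

lemma lt_card_le_iff_le_sortDesc (a : Fin q → α) (s : α) (j : Fin q) :
    (j : ℕ) < #{i | s ≤ a i} ↔ s ≤ sortDesc a j := by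
  rw [← card_filter_le_sortDesc]
  exact Tuple.lt_card_ge_iff_apply_ge_of_antitone (sortDesc_antitone a)

lemma slexLt_of_card_le {a b : Fin q → α} (t : α)
    (hle : ∀ s, t ≤ s → #{i | s ≤ a i} ≤ #{i | s ≤ b i})
    (hlt : #{i | t ≤ a i} < #{i | t ≤ b i}) : SLexLt a b := by
  set p := #{i | t ≤ a i}
  have hpq : p < q := hlt.trans_le ((card_le_univ _).trans_eq (Fintype.card_fin q))
  let m₀ : Fin q := ⟨p, hpq⟩
  have hA : sortDesc a m₀ < t :=
    lt_of_not_ge fun h => (lt_irrefl p) ((lt_card_le_iff_le_sortDesc a t m₀).2 h)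
  have hB : t ≤ sortDesc b m₀ := (lt_card_le_iff_le_sortDesc b t m₀).1 hlt
  obtain ⟨m, hm, hmin⟩ := wellFounded_lt.has_min {k | sortDesc a k ≠ sortDesc b k}
    ⟨m₀, (hA.trans_le hB).ne⟩
  refine ⟨m, fun i hi => not_not.1 fun h => hmin i h hi, ?_⟩
  rcases (not_lt.1 (hmin m₀ (hA.trans_le hB).ne)).lt_or_eq with hm₀ | rfl
  · have ht : t ≤ sortDesc a m := (lt_card_le_iff_le_sortDesc a t m).1 hm₀
    have hcard : (m : ℕ) < #{i | sortDesc a m ≤ b i} :=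
      ((lt_card_le_iff_le_sortDesc a _ m).2 le_rfl).trans_le (hle _ ht)
    exact ((lt_card_le_iff_le_sortDesc b _ m).1 hcard).lt_of_ne hm
  · exact hA.trans_le hB

lemma slexLt_of_forall_lt_exists_le_lt {a b : Fin q → α} (hdec : ∃ i, a i < b i)
    (hinc : ∀ i, b i < a i → ∃ j, a i ≤ a j ∧ a j < b j) : SLexLt a b := by
  obtain ⟨j₀, hj₀, hmax⟩ := exists_max_image {j | a j < b j} b
    (let ⟨i, hi⟩ := hdec; ⟨i, by simpa using hi⟩)
  rw [mem_filter_univ] at hj₀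
  have hdom : ∀ i, b j₀ ≤ a i → a i ≤ b i := by
    intro i hi
    by_contra! hba
    obtain ⟨j, hij, hj⟩ := hinc i hba
    exact (hi.trans hij |>.trans_lt hj).not_ge (hmax j (by simpa using hj))
  have hsub : ∀ s, b j₀ ≤ s →
      ({i | s ≤ a i} : Finset (Fin q)) ⊆ ({i | s ≤ b i} : Finset (Fin q)) := by
    intro s hs i
    simp only [mem_filter_univ]
    exact fun hi => hi.trans (hdom i (hs.trans hi))
  refine slexLt_of_card_le (b j₀) (fun s hs => card_le_card (hsub s hs)) (card_lt_card ?_)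
  exact (ssubset_iff_of_subset (hsub _ le_rfl)).2 ⟨j₀, by simpa using hj₀⟩

lemma slexLtOn_of_forall_lt_exists_le_lt {ι : Type*} [Fintype ι] {a b : ι → α}
    (hdec : ∃ i, a i < b i) (hinc : ∀ i, b i < a i → ∃ j, a i ≤ a j ∧ a j < b j) :
    SLexLtOn a b := by
  refine slexLt_of_forall_lt_exists_le_lt ?_ fun i hi => ?_
  · obtain ⟨i, hi⟩ := hdec
    exact ⟨Fintype.equivFin ι i, by simpa using hi⟩
  · obtain ⟨j, hj⟩ := hinc _ hi
    exact ⟨Fintype.equivFin ι j, by simpa using hj⟩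

end SortedLex

lemma exists_le_lt_of_bottleneck_cost_lt {ι F : Type*}
    (Xi : ι → Finset (Finset F)) (hstrat : ∀ i, ∀ s ∈ Xi i, s.Nonempty)
    (c : F → (ι → Finset F) → ℝ)
    (hmono : ∀ (f : F) (x y : ι → Finset F), (∀ i, x i ∈ Xi i) → (∀ i, y i ∈ Xi i) →
      (∀ i, f ∈ x i → f ∈ y i) → c f x ≤ c f y)
    (π : (ι → Finset F) → ι → ℝ)
    (hπ : ∀ (x : ι → Finset F) (hx : ∀ j, x j ∈ Xi j) (i : ι),
      π x i = (x i).sup' (hstrat i (x i) (hx i)) (fun f => c f x))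
    {x y : ι → Finset F} (hx : ∀ i, x i ∈ Xi i) (hy : ∀ i, y i ∈ Xi i)
    {S : Finset ι} (hout : ∀ i ∉ S, y i = x i) (himp : ∀ i ∈ S, π y i < π x i)
    {i : ι} (hi : π x i < π y i) : ∃ j, π y i ≤ π y j ∧ π y j < π x j := by
  have hiS : i ∉ S := fun h => (himp i h).not_gt hi
  obtain ⟨f, hf, hfy⟩ := exists_mem_eq_sup' (hstrat i (y i) (hy i)) (fun f => c f y)
  rw [← hπ y hy] at hfy
  have hfx : c f x ≤ π x i := hπ x hx i ▸ le_sup' (fun f => c f x) (hout i hiS ▸ hf)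
  have hnew : ∃ j, f ∈ y j ∧ f ∉ x j := by
    by_contra! h
    exact (hfx.trans_lt (hfy ▸ hi)).not_ge (hmono f y x hy hx h)
  obtain ⟨j, hfyj, hfxj⟩ := hnew
  have hjS : j ∈ S := by_contra fun h => hfxj (hout j h ▸ hfyj)
  exact ⟨j, hfy ▸ hπ y hy j ▸ le_sup' (fun f => c f y) hfyj, himp j hjS⟩

theorem stmt_11_general {ι F : Type*} [Fintype ι]
    (Xi : ι → Finset (Finset F))
    (hstrat : ∀ i, ∀ s ∈ Xi i, s.Nonempty)
    (c : F → (ι → Finset F) → ℝ)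
    (hmono : ∀ (f : F) (x y : ι → Finset F), (∀ i, x i ∈ Xi i) → (∀ i, y i ∈ Xi i) →
      (∀ i, f ∈ x i → f ∈ y i) → c f x ≤ c f y)
    (π : (ι → Finset F) → ι → ℝ)
    (hπ : ∀ (x : ι → Finset F) (hx : ∀ j, x j ∈ Xi j) (i : ι),
      π x i = (x i).sup' (hstrat i (x i) (hx i)) (fun f => c f x)) :
    ∀ x y : ι → Finset F, (∀ i, x i ∈ Xi i) → (∀ i, y i ∈ Xi i) →
      ImprovingMove π x y → SLexLtOn (π y) (π x) := by
  rintro x y hx hy ⟨S, ⟨k, hk⟩, hout, himp⟩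
  exact slexLtOn_of_forall_lt_exists_le_lt ⟨k, himp k hk⟩ fun i hi =>
    exists_le_lt_of_bottleneck_cost_lt Xi hstrat c hmono π hπ hx hy hout himp hi

/-- Every bottleneck congestion game has the π-LIP: along any
improving move the vector of private costs strictly decreases in the sorted
lexicographical order. Here `Xi i` is the (finite, nonempty) collection of
strategies (nonempty facility sets) of player `i`, and the facility costs
`c f` are non-negative, independent of irrelevant choices and monotone. -/
theorem stmt_11 {ι F : Type*} [Fintype ι] [Nonempty ι] [Fintype F] [DecidableEq F]
    (Xi : ι → Finset (Finset F)) (hXi : ∀ i, (Xi i).Nonempty)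
    (hstrat : ∀ i, ∀ s ∈ Xi i, s.Nonempty)
    (c : F → (ι → Finset F) → ℝ)
    (hnn : ∀ (f : F) (x : ι → Finset F), (∀ i, x i ∈ Xi i) → 0 ≤ c f x)
    (hiic : ∀ (f : F) (x y : ι → Finset F), (∀ i, x i ∈ Xi i) → (∀ i, y i ∈ Xi i) →
      (∀ i, f ∈ x i ↔ f ∈ y i) → c f x = c f y)
    (hmono : ∀ (f : F) (x y : ι → Finset F), (∀ i, x i ∈ Xi i) → (∀ i, y i ∈ Xi i) →
      (∀ i, f ∈ x i → f ∈ y i) → c f x ≤ c f y)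
    (π : (ι → Finset F) → ι → ℝ)
    (hπ : ∀ (x : ι → Finset F) (hx : ∀ j, x j ∈ Xi j) (i : ι),
      π x i = (x i).sup' (hstrat i (x i) (hx i)) (fun f => c f x)) :
    ∀ x y : ι → Finset F, (∀ i, x i ∈ Xi i) → (∀ i, y i ∈ Xi i) →
      ImprovingMove π x y → SLexLtOn (π y) (π x) :=
  stmt_11_general Xi hstrat c hmono π hπ
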